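/- arXiv:1501.04714 — 2 statements merged into one kernel-verified Lean document; each statement's English description precedes it below -/
import Mathlib

section
/- If θ is irrational and not badly approximable (i.e. inf_n n‖nθ‖ = 0), then there exists a positive non-increasing sequence ψ with ∑_{n≥1} ψ(n) = ∞ such that ∑_{k≥0} ∑_{n=q_k}^{q_{k+1}-1} min(ψ(n), ‖q_k θ‖) < ∞, where q_k are the convergent denominators of θ. -/
/-!
Write `ε k = ‖q k θ‖`. The continued fraction gives `1 / (2 q (k+1)) ≤ ε k` for `k ≥ 1`, and
Legendre's theorem turns every `n` with `n ‖nθ‖ < 1/2` into a convergent denominator `q k ≤ n`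
with `q k ε k ≤ n ‖nθ‖`. So, as `θ` is not badly approximable, `q k ε k` is arbitrarily small,
and we can pick `k₀ < k₁ < ⋯` with `q (k j) ε (k j) < a j ^ 2`, where `a j = 4⁻¹ ^ (j + 1)`.

Let `ψ` be the step function equal to `ε (k j) / a j` on `[q (k j), q (k j) + ⌈a j / ε (k j)⌉)`
and on the gap before it. Since `q (k j + 1) ≥ 1 / (2 ε (k j))` is large compared to `a j / ε (k j)`
and `q (k j)`, this block fits below `q (k j + 1)`; it contributes at least `1` to `∑ ψ`, but only
about `a j` to the double sum, where the minimum is at most `ε (k j)`. The gap before the next block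
has fewer than `q (k (j+1))` terms of size `ε (k (j+1)) / a (j+1) < a (j+1) / q (k (j+1))`.
-/

open MeasureTheory Filter
open scoped ENNReal Classical

/-- Distance from a real number to the nearest integer. -/
noncomputable def distNearestInt (x : ℝ) : ℝ := |x - round x|

open Finset

lemma sum_Ico_sum_Ico_of_monotone {M : Type*} [AddCommMonoid M] {f : ℕ → ℕ} (hf : Monotone f)
    (g : ℕ → M) {a b : ℕ} (hab : a ≤ b) :
    ∑ k ∈ Ico a b, ∑ n ∈ Ico (f k) (f (k + 1)), g n = ∑ n ∈ Ico (f a) (f b), g n := by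
  induction b, hab using Nat.le_induction with
  | base => simp
  | succ b hab ih => rw [sum_Ico_succ_top hab, ih, sum_Ico_consecutive _ (hf hab) (hf b.le_succ)]

lemma not_summable_of_one_le_sum_Ico {f : ℕ → ℝ} {s e : ℕ → ℕ} (hs : Tendsto s atTop atTop)
    (h : ∀ j, 1 ≤ ∑ n ∈ Ico (s j) (e j), f n) : ¬Summable f := by
  intro hf
  obtain ⟨t, ht⟩ := summable_iff_vanishing_norm.1 hf 1 one_pos
  obtain ⟨j, hj⟩ := (hs.eventually_gt_atTop (t.sup id)).exists
  have hdisj : Disjoint (Ico (s j) (e j)) t := disjoint_left.2 fun n hn hnt =>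
    ((le_sup (f := id) hnt).trans_lt hj).not_ge (mem_Ico.1 hn).1
  have := ht _ hdisj
  rw [Real.norm_eq_abs] at this
  linarith [le_abs_self (∑ n ∈ Ico (s j) (e j), f n), h j]

lemma summable_of_sum_Ico_le {f b : ℕ → ℝ} {κ : ℕ → ℕ} (hf : ∀ k, 0 ≤ f k) (hκ : StrictMono κ)
    (hb : Summable b) (h : ∀ j, ∑ k ∈ Ico (κ j) (κ (j + 1)), f k ≤ b j) : Summable f := by
  have hb₀ : ∀ j, 0 ≤ b j := fun j => (sum_nonneg fun k _ => hf k).trans (h j)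
  refine summable_of_sum_range_le hf (c := ∑ k ∈ range (κ 0), f k + ∑' j, b j) fun N => ?_
  calc ∑ k ∈ range N, f k ≤ ∑ k ∈ range (κ N), f k :=
        sum_le_sum_of_subset_of_nonneg (range_subset_range.2 (hκ.id_le N)) fun k _ _ => hf k
    _ = ∑ k ∈ range (κ 0), f k + ∑ j ∈ range N, ∑ k ∈ Ico (κ j) (κ (j + 1)), f k := by
        rw [range_eq_Ico, range_eq_Ico, range_eq_Ico,
          sum_Ico_sum_Ico_of_monotone hκ.monotone _ N.zero_le,
          sum_Ico_consecutive _ (Nat.zero_le _) (hκ.monotone N.zero_le)]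
    _ ≤ ∑ k ∈ range (κ 0), f k + ∑' j, b j := by
        gcongr
        exact (sum_le_sum fun j _ => h j).trans (hb.sum_le_tsum _ fun j _ => hb₀ j)

lemma sum_Ico_sum_Ico_min_le {q : ℕ → ℕ} (hq : Monotone q) (ψ ε : ℕ → ℝ) {k₀ k₁ E : ℕ}
    (hk : k₀ < k₁) (hE₀ : q k₀ ≤ E) (hE : E ≤ q (k₀ + 1)) :
    ∑ k ∈ Ico k₀ k₁, ∑ n ∈ Ico (q k) (q (k + 1)), min (ψ n) (ε k)
      ≤ (E - q k₀ : ℕ) * ε k₀ + ∑ n ∈ Ico E (q k₁), ψ n := by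
  set g : ℕ → ℝ := fun n => if n < E then ε k₀ else ψ n
  have hpoint : ∀ k ∈ Ico k₀ k₁, ∀ n ∈ Ico (q k) (q (k + 1)), min (ψ n) (ε k) ≤ g n := by
    intro k hk n hn
    rw [mem_Ico] at hk hn
    by_cases hnE : n < E
    · obtain rfl : k = k₀ := by
        by_contra hne
        have := hq (show k₀ + 1 ≤ k by omega)
        omega
      simp only [g, if_pos hnE]
      exact min_le_right _ _
    · simp only [g, if_neg hnE]
      exact min_le_left _ _
  calc _ ≤ ∑ k ∈ Ico k₀ k₁, ∑ n ∈ Ico (q k) (q (k + 1)), g n :=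
        sum_le_sum fun k hk => sum_le_sum (hpoint k hk)
    _ = ∑ n ∈ Ico (q k₀) E, g n + ∑ n ∈ Ico E (q k₁), g n := by
        rw [sum_Ico_sum_Ico_of_monotone hq _ hk.le, sum_Ico_consecutive _ hE₀ (hE.trans (hq hk))]
    _ = (E - q k₀ : ℕ) * ε k₀ + ∑ n ∈ Ico E (q k₁), ψ n := by
        congr 1
        · rw [sum_congr rfl fun n hn => if_pos (mem_Ico.1 hn).2, sum_const, Nat.card_Ico,
            nsmul_eq_mul]
        · exact sum_congr rfl fun n hn => if_neg (not_lt.2 (mem_Ico.1 hn).1)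

section StepFunction

variable {E : ℕ → ℕ} (hE : ∀ n, ∃ j, n < E j) (δ : ℕ → ℝ)

/-- For monotone `E`, this is `δ j` on `[E (j - 1), E j)`. -/
noncomputable def stepFunction (n : ℕ) : ℝ := δ (Nat.find (hE n))

variable {hE δ}

lemma stepFunction_antitone (hδ : Antitone δ) : Antitone (stepFunction hE δ) :=
  fun _ _ hmn => hδ (Nat.find_mono fun _ hj => hmn.trans_lt hj)

lemma le_stepFunction (hδ : Antitone δ) {n j : ℕ} (h : n < E j) : δ j ≤ stepFunction hE δ n :=
  hδ (Nat.find_le h)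

lemma stepFunction_le (hEm : Monotone E) (hδ : Antitone δ) {n j : ℕ} (h : E j ≤ n) :
    stepFunction hE δ n ≤ δ (j + 1) :=
  hδ ((Nat.lt_find_iff _ _).2 fun _ hi => not_lt.2 ((hEm hi).trans h))

lemma not_summable_stepFunction (hδ : Antitone δ) {s : ℕ → ℕ} (hs : Tendsto s atTop atTop)
    (h : ∀ j, 1 ≤ (E j - s j : ℕ) * δ j) : ¬Summable (stepFunction hE δ) :=
  not_summable_of_one_le_sum_Ico hs fun j => (h j).trans <| by
    rw [← Nat.card_Ico, ← nsmul_eq_mul, ← sum_const]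
    exact sum_le_sum fun n hn => le_stepFunction hδ (mem_Ico.1 hn).2

lemma sum_Ico_stepFunction_le (hEm : Monotone E) (hδ : Antitone δ) (hδ₀ : ∀ j, 0 ≤ δ j)
    (j Q : ℕ) : ∑ n ∈ Ico (E j) Q, stepFunction hE δ n ≤ Q * δ (j + 1) :=
  calc ∑ n ∈ Ico (E j) Q, stepFunction hE δ n ≤ (Ico (E j) Q).card • δ (j + 1) :=
        sum_le_card_nsmul _ _ _ fun n hn => stepFunction_le hEm hδ (mem_Ico.1 hn).1
    _ ≤ Q * δ (j + 1) := by
        rw [nsmul_eq_mul, Nat.card_Ico]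
        gcongr
        exacts [hδ₀ _, Nat.sub_le _ _]

end StepFunction

lemma ceil_div_mul_lt {a e : ℝ} (ha : 0 ≤ a) (he : 0 < e) : (⌈a / e⌉₊ : ℝ) * e < a + e :=
  calc (⌈a / e⌉₊ : ℝ) * e < (a / e + 1) * e := by gcongr; exact Nat.ceil_lt_add_one (by positivity)
    _ = a + e := by field_simp

lemma add_ceil_div_le {s Q : ℕ} {e a : ℝ} (he : 0 < e) (hs : 0 < s) (ha : 0 < a)
    (ha' : a ≤ 1 / 4) (hsmall : s * e < a ^ 2) (hlow : 1 ≤ 2 * Q * e) : s + ⌈a / e⌉₊ ≤ Q := by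
  have hceil := ceil_div_mul_lt ha.le he
  have he' : e < a ^ 2 := by nlinarith [(by exact_mod_cast hs : (1 : ℝ) ≤ s)]
  have : ((s + ⌈a / e⌉₊ : ℕ) : ℝ) < Q := by
    refine lt_of_mul_lt_mul_right ?_ he.le
    push_cast
    nlinarith
  exact_mod_cast this.le

lemma div_le_div_of_mul_lt_sq {Q s : ℕ} {e e' a a' : ℝ} (ha : 0 < a) (ha' : 0 < a')
    (haa : 2 * a * a' ≤ 1) (hQ : Q ≤ s) (hlow : 1 ≤ 2 * Q * e) (hsmall : s * e' < a' ^ 2) :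
    e' / a' ≤ e / a := by
  have hQs : (Q : ℝ) ≤ s := by exact_mod_cast hQ
  have hQ₀ : 0 < Q := Nat.pos_of_ne_zero (by rintro rfl; norm_num at hlow)
  have hs : (0 : ℝ) < s := by exact_mod_cast hQ₀.trans_le hQ
  rw [div_le_div_iff₀ ha' ha]
  refine le_of_mul_le_mul_left ?_ (by positivity : (0 : ℝ) < 2 * s)
  calc 2 * s * (e' * a) = 2 * a * (s * e') := by ring
    _ ≤ 2 * a * a' ^ 2 := by gcongr
    _ ≤ a' * (2 * Q * e) := by nlinarith
    _ ≤ a' * (2 * s * e) := by gcongr; nlinarith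
    _ = 2 * s * (e * a') := by ring

theorem exists_antitone_not_summable_summable_sum_min_of_strictMono {q κ : ℕ → ℕ} {ε a : ℕ → ℝ}
    (hq : Monotone q) (hq₀ : ∀ k, 0 < q k) (hq_top : Tendsto q atTop atTop) (hε : ∀ k, 0 < ε k)
    (ha : ∀ j, 0 < a j) (ha' : ∀ j, a j ≤ 1 / 4) (ha_anti : Antitone a) (hsum : Summable a)
    (hκ : StrictMono κ) (hsmall : ∀ j, q (κ j) * ε (κ j) < a j ^ 2)
    (hlow : ∀ j, 1 ≤ 2 * q (κ j + 1) * ε (κ j)) :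
    ∃ ψ : ℕ → ℝ, (∀ n, 0 < ψ n) ∧ Antitone ψ ∧ ¬Summable ψ ∧
      Summable fun k => ∑ n ∈ Ico (q k) (q (k + 1)), min (ψ n) (ε k) := by
  have hκq : ∀ j, q (κ j + 1) ≤ q (κ (j + 1)) := fun j => hq (hκ j.lt_succ_self)
  have hδ₀ : ∀ j, 0 < ε (κ j) / a j := fun j => div_pos (hε _) (ha j)
  set E : ℕ → ℕ := fun j => q (κ j) + ⌈a j / ε (κ j)⌉₊
  have hE_le : ∀ j, E j ≤ q (κ j + 1) := fun j =>
    add_ceil_div_le (hε _) (hq₀ _) (ha j) (ha' j) (hsmall j) (hlow j)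
  have hEm : Monotone E := monotone_nat_of_le_succ fun j =>
    (hE_le j).trans ((hκq j).trans (Nat.le_add_right _ _))
  have hEtop : ∀ n, ∃ j, n < E j := fun n =>
    (((hq_top.comp hκ.tendsto_atTop).eventually_gt_atTop n).exists).imp fun j hj =>
      hj.trans_le (Nat.le_add_right _ _)
  have hδ : Antitone fun j => ε (κ j) / a j := antitone_nat_of_succ_le fun j =>
    div_le_div_of_mul_lt_sq (ha j) (ha (j + 1)) (by nlinarith [ha' j, ha' (j + 1), ha j])
      (hκq j) (hlow j) (hsmall (j + 1))
  have hlen : ∀ j, E j - q (κ j) = ⌈a j / ε (κ j)⌉₊ := fun j => Nat.add_sub_cancel_left _ _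
  refine ⟨stepFunction hEtop fun j => ε (κ j) / a j, fun n => hδ₀ _, stepFunction_antitone hδ,
    not_summable_stepFunction hδ (hq_top.comp hκ.tendsto_atTop) fun j => ?_,
    summable_of_sum_Ico_le (fun k => sum_nonneg fun n _ => le_min (hδ₀ _).le (hε k).le) hκ
      (hsum.mul_left 3) fun j => (sum_Ico_sum_Ico_min_le hq _ _ (hκ j.lt_succ_self)
        (Nat.le_add_right _ _) (hE_le j)).trans ?_⟩
  · rw [Function.comp_apply, hlen, ← div_le_iff₀ (hδ₀ j), one_div_div]
    exact Nat.le_ceil _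
  · have hblock : ((E j - q (κ j) : ℕ) : ℝ) * ε (κ j) ≤ 2 * a j := by
      have hεq : ε (κ j) ≤ q (κ j) * ε (κ j) :=
        le_mul_of_one_le_left (hε _).le (by exact_mod_cast hq₀ _)
      rw [hlen]
      nlinarith [ceil_div_mul_lt (ha j).le (hε (κ j)), hsmall j, ha' j, ha j]
    have hgap : q (κ (j + 1)) * (ε (κ (j + 1)) / a (j + 1)) ≤ a (j + 1) := by
      rw [mul_div_assoc', div_le_iff₀ (ha _), ← sq]
      exact (hsmall (j + 1)).le
    linarith [sum_Ico_stepFunction_le (hE := hEtop) hEm hδ (fun j => (hδ₀ j).le) j (q (κ (j + 1))),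
      ha_anti j.le_succ]

theorem exists_antitone_not_summable_summable_sum_min {q : ℕ → ℕ} {ε : ℕ → ℝ} (hq : Monotone q)
    (hq₀ : ∀ k, 0 < q k) (hq_top : Tendsto q atTop atTop) (hε : ∀ k, 0 < ε k)
    (hlow : ∀ᶠ k in atTop, 1 ≤ 2 * q (k + 1) * ε k)
    (hsmall : ∀ c > 0, ∃ᶠ k in atTop, q k * ε k < c) :
    ∃ ψ : ℕ → ℝ, (∀ n, 0 < ψ n) ∧ Antitone ψ ∧ ¬Summable ψ ∧
      Summable fun k => ∑ n ∈ Ico (q k) (q (k + 1)), min (ψ n) (ε k) := by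
  have ha : ∀ j, (0 : ℝ) < (1 / 4) ^ (j + 1) := fun j => by positivity
  obtain ⟨κ, hκ, hκ'⟩ := extraction_forall_of_frequently fun j =>
    (hsmall _ (pow_pos (ha j) 2)).and_eventually hlow
  exact exists_antitone_not_summable_summable_sum_min_of_strictMono hq hq₀ hq_top hε ha
    (fun j => pow_le_of_le_one (by norm_num) (by norm_num) j.succ_ne_zero)
    (fun _ _ hij => pow_le_pow_of_le_one (by norm_num) (by norm_num) (by omega))
    ((summable_nat_add_iff 1).2 (summable_geometric_of_lt_one (by norm_num) (by norm_num)))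
    hκ (fun j => (hκ' j).1) (fun j => (hκ' j).2)

lemma distNearestInt_le (x : ℝ) (z : ℤ) : distNearestInt x ≤ |x - z| := round_le x z

lemma distNearestInt_pos {x : ℝ} (hx : Irrational x) : 0 < distNearestInt x :=
  abs_pos.2 (sub_ne_zero.2 (hx.ne_int _))

lemma one_le_mul_abs_sub_add_mul_abs_sub (θ : ℝ) {n d : ℕ} {m c : ℤ} (h : (n : ℤ) * c ≠ m * d) :
    1 ≤ d * |n * θ - m| + n * |d * θ - c| := by
  have hdet : (1 : ℝ) ≤ |((n * c - m * d : ℤ) : ℝ)| := by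
    exact_mod_cast Int.one_le_abs (sub_ne_zero.2 h)
  calc (1 : ℝ) ≤ |(d : ℝ) * (n * θ - m) - n * (d * θ - c)| := by
        convert hdet using 2; push_cast; ring
    _ ≤ |(d : ℝ) * (n * θ - m)| + |(n : ℝ) * (d * θ - c)| := abs_sub _ _
    _ = d * |n * θ - m| + n * |d * θ - c| := by simp only [abs_mul, Nat.abs_cast]

lemma frequently_lt_of_forall_exists_lt {f : ℕ → ℝ} (hf : ∀ k, 0 < f k)
    (h : ∀ c > 0, ∃ k, f k < c) {c : ℝ} (hc : 0 < c) : ∃ᶠ k in atTop, f k < c := by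
  refine frequently_atTop.2 fun K => ?_
  obtain ⟨k₀, -, hk₀⟩ := (range (K + 1)).exists_min_image f nonempty_range_add_one
  obtain ⟨k, hk⟩ := h (min c (f k₀)) (lt_min hc (hf k₀))
  refine ⟨k, ?_, hk.trans_le (min_le_left _ _)⟩
  by_contra! hkK
  exact (hk.trans_le (min_le_right _ _)).not_ge (hk₀ k (mem_range.2 (by omega)))

section ContinuedFraction

variable {θ : ℝ}

lemma not_terminatedAt_of_irrational (hθ : Irrational θ) (n : ℕ) :
    ¬(GenContFract.of θ).TerminatedAt n := fun h =>
  let ⟨r, hr⟩ := (GenContFract.terminates_iff_rat θ).1 ⟨n, h⟩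
  hθ ⟨r, hr.symm⟩

lemma exists_int_contsAux_a (hθ : Irrational θ) :
    ∀ n, ∃ z : ℤ, (z : ℝ) = ((GenContFract.of θ).contsAux n).a
  | 0 => ⟨1, by simp [GenContFract.zeroth_contAux_eq_one_zero]⟩
  | 1 => ⟨⌊θ⌋, by rw [GenContFract.first_contAux_eq_h_one, GenContFract.of_h_eq_floor]⟩
  | n + 2 => by
    obtain ⟨gp, hgp⟩ := Option.ne_none_iff_exists'.1 (not_terminatedAt_of_irrational hθ n)
    obtain ⟨a, ha⟩ := exists_int_contsAux_a hθ n
    obtain ⟨b, hb⟩ := exists_int_contsAux_a hθ (n + 1)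
    obtain ⟨z, hz⟩ := GenContFract.exists_int_eq_of_partDen (GenContFract.partDen_eq_s_b hgp)
    rw [GenContFract.contsAux_recurrence hgp rfl rfl,
      GenContFract.of_partNum_eq_one (GenContFract.partNum_eq_s_a hgp), ← ha, ← hb, hz]
    exact ⟨z * b + a, by push_cast; ring⟩

lemma exists_int_nums (hθ : Irrational θ) (n : ℕ) :
    ∃ z : ℤ, (z : ℝ) = (GenContFract.of θ).nums n :=
  exists_int_contsAux_a hθ (n + 1)

variable {q : ℕ → ℕ} {p : ℕ → ℤ}

lemma den_monotone (hq : ∀ k, (q k : ℝ) = (GenContFract.of θ).dens k) : Monotone q :=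
  monotone_nat_of_le_succ fun k => by
    exact_mod_cast (hq k).trans_le (GenContFract.of_den_mono.trans (hq (k + 1)).ge)

lemma den_pos (hq : ∀ k, (q k : ℝ) = (GenContFract.of θ).dens k) (k : ℕ) : 0 < q k := by
  have h0 : q 0 = 1 := by exact_mod_cast (hq 0).trans GenContFract.zeroth_den_eq_one
  have := den_monotone hq k.zero_le
  omega

lemma den_add_den_le (hθ : Irrational θ) (hq : ∀ k, (q k : ℝ) = (GenContFract.of θ).dens k)
    (k : ℕ) : q k + q (k + 1) ≤ q (k + 2) := by
  obtain ⟨gp, hgp⟩ := Option.ne_none_iff_exists'.1 (not_terminatedAt_of_irrational hθ (k + 1))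
  have hb : 1 ≤ gp.b := GenContFract.of_one_le_get?_partDen (GenContFract.partDen_eq_s_b hgp)
  have hrec := GenContFract.dens_recurrence hgp (hq k).symm (hq (k + 1)).symm
  rw [GenContFract.of_partNum_eq_one (GenContFract.partNum_eq_s_a hgp), ← hq] at hrec
  have : (q k : ℝ) + q (k + 1) ≤ q (k + 2) := by
    rw [hrec]; nlinarith [(Nat.cast_nonneg (q (k + 1)) : (0 : ℝ) ≤ _)]
  exact_mod_cast this

lemma tendsto_den (hθ : Irrational θ) (hq : ∀ k, (q k : ℝ) = (GenContFract.of θ).dens k) :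
    Tendsto q atTop atTop := by
  have hle : ∀ k, k ≤ q (k + 1) := fun k => by
    induction k with
    | zero => exact Nat.zero_le _
    | succ k ih =>
      show k + 1 ≤ q (k + 2)
      have := den_add_den_le hθ hq k; have := den_pos hq k; omega
  exact tendsto_atTop_atTop.2 fun b => ⟨b + 1, fun k hk => (hle b).trans (den_monotone hq hk)⟩

lemma num_mul_den_sub_den_mul_num (hθ : Irrational θ)
    (hq : ∀ k, (q k : ℝ) = (GenContFract.of θ).dens k)
    (hp : ∀ k, (p k : ℝ) = (GenContFract.of θ).nums k) (k : ℕ) :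
    p k * q (k + 1) - q k * p (k + 1) = (-1 : ℤ) ^ (k + 1) := by
  have h := SimpContFract.determinant (s := ⟨_, GenContFract.of_isSimpContFract θ⟩)
    (not_terminatedAt_of_irrational hθ k)
  simp only [← hq, ← hp] at h
  exact_mod_cast h

lemma isCoprime_num_den (hθ : Irrational θ)
    (hq : ∀ k, (q k : ℝ) = (GenContFract.of θ).dens k)
    (hp : ∀ k, (p k : ℝ) = (GenContFract.of θ).nums k) (k : ℕ) : IsCoprime (p k) (q k) := by
  have hdet := num_mul_den_sub_den_mul_num hθ hq hp k
  have hsq : ((-1 : ℤ) ^ (k + 1)) ^ 2 = 1 := by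
    rw [← pow_mul, mul_comm, pow_mul, neg_one_sq, one_pow]
  exact ⟨(-1) ^ (k + 1) * q (k + 1), -(-1) ^ (k + 1) * p (k + 1),
    by linear_combination (-1 : ℤ) ^ (k + 1) * hdet + hsq⟩

lemma den_le_of_mul_num_eq (hθ : Irrational θ)
    (hq : ∀ k, (q k : ℝ) = (GenContFract.of θ).dens k)
    (hp : ∀ k, (p k : ℝ) = (GenContFract.of θ).nums k) {k n : ℕ} {m : ℤ} (hn : 0 < n)
    (h : (n : ℤ) * p k = m * q k) : q k ≤ n := by
  have hdvd : (q k : ℤ) ∣ n := (isCoprime_num_den hθ hq hp k).symm.dvd_of_dvd_mul_right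
    ⟨m, by rw [h, mul_comm]⟩
  exact_mod_cast Int.le_of_dvd (by exact_mod_cast hn) hdvd

lemma abs_den_mul_sub_num_le (hθ : Irrational θ)
    (hq : ∀ k, (q k : ℝ) = (GenContFract.of θ).dens k)
    (hp : ∀ k, (p k : ℝ) = (GenContFract.of θ).nums k) (k : ℕ) :
    |q k * θ - p k| ≤ 1 / q (k + 1) := by
  have h := GenContFract.abs_sub_convs_le (not_terminatedAt_of_irrational hθ k)
  rw [GenContFract.conv_eq_num_div_den, ← hq, ← hq, ← hp] at h
  have hk : (0 : ℝ) < q k := by exact_mod_cast den_pos hq k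
  calc |q k * θ - p k| = q k * |θ - p k / q k| := by
        rw [← abs_of_pos hk, ← abs_mul, abs_of_pos hk, mul_sub, mul_div_cancel₀ _ hk.ne']
    _ ≤ q k * (1 / (q k * q (k + 1))) := by gcongr
    _ = 1 / q (k + 1) := by field_simp

lemma one_le_two_mul_den_mul_distNearestInt (hθ : Irrational θ)
    (hq : ∀ k, (q k : ℝ) = (GenContFract.of θ).dens k)
    (hp : ∀ k, (p k : ℝ) = (GenContFract.of θ).nums k) (k : ℕ) :
    1 ≤ 2 * q (k + 2) * distNearestInt (q (k + 1) * θ) := by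
  have hlt : q (k + 1) < q (k + 2) := by
    have := den_add_den_le hθ hq k; have := den_pos hq k; omega
  have hne : (q (k + 1) : ℤ) * p (k + 2) ≠ round (q (k + 1) * θ) * q (k + 2) := fun h =>
    hlt.not_ge (den_le_of_mul_num_eq hθ hq hp (den_pos hq _) h)
  have htwo : 2 * (q (k + 1) : ℝ) ≤ q (k + 3) := by
    have h1 : q (k + 1) + q (k + 2) ≤ q (k + 3) := den_add_den_le hθ hq (k + 1)
    have h2 : q (k + 1) ≤ q (k + 2) := den_monotone hq (by omega)
    exact_mod_cast (by omega : 2 * q (k + 1) ≤ q (k + 3))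
  have h3 : (0 : ℝ) < q (k + 3) := by exact_mod_cast den_pos hq _
  have hhalf : q (k + 1) * |q (k + 2) * θ - p (k + 2)| ≤ (1 / 2 : ℝ) :=
    calc q (k + 1) * |q (k + 2) * θ - p (k + 2)| ≤ q (k + 1) * (1 / q (k + 3)) := by
          gcongr; exact abs_den_mul_sub_num_le hθ hq hp _
      _ ≤ 1 / 2 := by rw [mul_one_div, div_le_iff₀ h3]; linarith
  have := one_le_mul_abs_sub_add_mul_abs_sub θ hne
  unfold distNearestInt
  linarith

lemma exists_den_mul_distNearestInt_le (hθ : Irrational θ)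
    (hq : ∀ k, (q k : ℝ) = (GenContFract.of θ).dens k)
    (hp : ∀ k, (p k : ℝ) = (GenContFract.of θ).nums k) {n : ℕ} (hn : 0 < n)
    (h : n * distNearestInt (n * θ) < 1 / 2) :
    ∃ k, q k * distNearestInt (q k * θ) ≤ n * distNearestInt (n * θ) := by
  set m := round (n * θ)
  have hn' : (0 : ℝ) < n := by exact_mod_cast hn
  have hden : ((Rat.divInt m n).den : ℝ) ≤ n := by
    exact_mod_cast Int.le_of_dvd (by exact_mod_cast hn) (Rat.den_dvd m n)
  have hdist : |θ - (Rat.divInt m n : ℝ)| = distNearestInt (n * θ) / n := by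
    have hsub : θ - (m : ℝ) / n = (n * θ - m) / n := by field_simp
    rw [Rat.cast_divInt, Int.cast_natCast, hsub, abs_div, abs_of_pos hn']
    rfl
  obtain ⟨k, hk⟩ := Real.exists_convs_eq_rat (ξ := θ) (q := Rat.divInt m n) <| by
    rw [hdist]
    calc distNearestInt (n * θ) / n < 1 / (2 * n ^ 2) := by
          rw [div_lt_div_iff₀ hn' (by positivity)]; nlinarith
      _ ≤ 1 / (2 * (Rat.divInt m n).den ^ 2) := by gcongr
  rw [GenContFract.conv_eq_num_div_den, ← hp, ← hq, Rat.cast_divInt, Int.cast_natCast] at hk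
  have hqk : (0 : ℝ) < q k := by exact_mod_cast den_pos hq k
  have hqn : q k ≤ n := den_le_of_mul_num_eq hθ hq hp hn <| by
    rw [div_eq_div_iff hqk.ne' hn'.ne'] at hk
    exact_mod_cast (by linarith : (n : ℝ) * p k = m * q k)
  refine ⟨k, ?_⟩
  calc q k * distNearestInt (q k * θ) ≤ q k * |q k * θ - p k| := by
        gcongr; exact distNearestInt_le _ _
    _ = q k ^ 2 * |θ - (m : ℝ) / n| := by
        rw [← hk, show (q k : ℝ) * θ - p k = q k * (θ - p k / q k) by field_simp, abs_mul,
          abs_of_pos hqk]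
        ring
    _ ≤ n ^ 2 * |θ - (m : ℝ) / n| := by gcongr
    _ = n * distNearestInt (n * θ) := by
        rw [show (m : ℝ) / n = (Rat.divInt m n : ℝ) by rw [Rat.cast_divInt, Int.cast_natCast],
          hdist]
        field_simp

end ContinuedFraction

theorem not_badly_approximable_convergence
    (θ : ℝ) (hθ : Irrational θ) (q : ℕ → ℕ)
    (hq : ∀ k, (q k : ℝ) = (GenContFract.of θ).dens k)
    (hnotbad : ∀ c : ℝ, 0 < c → ∃ n : ℕ, 1 ≤ n ∧ (n : ℝ) * distNearestInt ((n : ℝ) * θ) < c) :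
    ∃ ψ : ℕ → ℝ, (∀ n, 0 < ψ n) ∧ (∀ m n, m ≤ n → ψ n ≤ ψ m) ∧
      (¬ Summable ψ) ∧
      Summable fun k =>
        ∑ n ∈ Finset.Ico (q k) (q (k + 1)), min (ψ n) (distNearestInt ((q k : ℝ) * θ)) := by
  choose p hp using exists_int_nums hθ
  have hε : ∀ k, 0 < distNearestInt (q k * θ) := fun k =>
    distNearestInt_pos (hθ.natCast_mul (den_pos hq k).ne')
  have hlow : ∀ᶠ k in atTop, 1 ≤ 2 * q (k + 1) * distNearestInt (q k * θ) :=
    eventually_atTop.2 ⟨1, fun k hk => by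
      obtain ⟨k, rfl⟩ := Nat.exists_eq_add_of_le' hk
      exact one_le_two_mul_den_mul_distNearestInt hθ hq hp k⟩
  have hsmall : ∀ c > 0, ∃ k, q k * distNearestInt (q k * θ) < c := fun c hc => by
    obtain ⟨n, hn, hnc⟩ := hnotbad (min c (1 / 2)) (by positivity)
    obtain ⟨k, hk⟩ :=
      exists_den_mul_distNearestInt_le hθ hq hp hn (hnc.trans_le (min_le_right _ _))
    exact ⟨k, hk.trans_lt (hnc.trans_le (min_le_left _ _))⟩
  have hpos : ∀ k, 0 < q k * distNearestInt (q k * θ) := fun k =>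
    mul_pos (by exact_mod_cast den_pos hq k) (hε k)
  obtain ⟨ψ, hψ, hanti, hdiv, hconv⟩ := exists_antitone_not_summable_summable_sum_min
    (den_monotone hq) (den_pos hq) (tendsto_den hθ hq) hε hlow
    fun c hc => frequently_lt_of_forall_exists_lt hpos hsmall hc
  exact ⟨ψ, hψ, hanti, hdiv, hconv⟩
end

section
/- Let ψ be positive non-increasing, θ irrational with convergent denominators q_k, and suppose ψ(q_{k+1}−1) ≥ ‖q_k θ‖ for infinitely many k. Then ∑_{k≥0} ∑_{n=q_k}^{q_{k+1}-1} min(ψ(n), ‖q_k θ‖) = ∞; in fact for each such k ≥ 1, ∑_{n=q_{k-1}}^{q_{k+1}-1} min(ψ(n), ‖q_{k-1 or k} θ‖) ≥ 1/4 (taking ‖q_{k-1}θ‖ for n < q_k and ‖q_kθ‖ for n ≥ q_k). -/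
open MeasureTheory Filter
open scoped ENNReal Classical

/-!
With `tₙ ∈ (0, 1)` the fractional parts of the continued fraction expansion, the errors
`δₖ = |qₖθ - pₖ| = 1 / (qₖ₊₁ + tₖ₊₁ qₖ)` satisfy `δₖ₊₁ = tₖ₊₁ δₖ` and `qₖ₊₁ δₖ ≥ 1/2`; for `k ≥ 1`
also `δₖ < 1/2`, so `δₖ = ‖qₖθ‖ ≤ ‖qₖ₋₁θ‖`. If `ψ(qₖ₊₁ - 1) ≥ δₖ`, monotonicity makes every
summand with `qₖ₋₁ ≤ n < qₖ₊₁` at least `δₖ`, so two consecutive blocks sum to at least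
`(qₖ₊₁ - qₖ₋₁) δₖ ≥ qₖ₊₁ δₖ / 2 ≥ 1/4`, since `qₖ₊₁ ≥ qₖ + qₖ₋₁ ≥ 2 qₖ₋₁`. As this happens for
infinitely many `k`, the block sums do not tend to `0`.
-/

open GenContFract

theorem distNearestInt_eq_of_abs_sub_lt {x : ℝ} {p : ℤ} (h : |x - p| < 1 / 2) :
    distNearestInt x = |x - p| := by
  obtain ⟨h₁, h₂⟩ := abs_sub_lt_iff.mp h
  rw [distNearestInt, round_eq_iff (n := p) |>.mpr ⟨by linarith, by linarith⟩]

section ContinuedFraction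

variable {θ : ℝ}

/-- The fractional part `tₙ` in the `n`-th step of the expansion, so that `tₙ⁻¹` is the
`(n+1)`-st complete quotient and `t₀ = fract θ`. -/
noncomputable def cfFract (θ : ℝ) (n : ℕ) : ℝ :=
  ((IntFractPair.stream θ n).map IntFractPair.fr).getD 0

/-- Closed form `1 / (qₙ₊₁ + tₙ₊₁ qₙ)` of the error `|qₙθ - pₙ|`. -/
noncomputable def cfError (θ : ℝ) (n : ℕ) : ℝ :=
  ((GenContFract.of θ).dens (n + 1) + cfFract θ (n + 1) * (GenContFract.of θ).dens n)⁻¹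

theorem cfFract_eq {n : ℕ} {ifp : IntFractPair ℝ} (h : IntFractPair.stream θ n = some ifp) :
    cfFract θ n = ifp.fr := by
  simp [cfFract, h]

theorem Irrational.exists_stream_eq_some (hθ : Irrational θ) (n : ℕ) :
    ∃ ifp, IntFractPair.stream θ n = some ifp ∧ ifp.fr ≠ 0 := by
  have hnt : ¬(GenContFract.of θ).TerminatedAt n := fun h =>
    have ⟨r, hr⟩ := (terminates_iff_rat θ).mp ⟨n, h⟩
    hθ ⟨r, hr.symm⟩
  rw [of_terminatedAt_n_iff_succ_nth_intFractPair_stream_eq_none, ← ne_eq,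
    Option.ne_none_iff_exists'] at hnt
  obtain ⟨_, hsucc⟩ := hnt
  obtain ⟨ifp, hn, hfr, -⟩ := IntFractPair.succ_nth_stream_eq_some_iff.mp hsucc
  exact ⟨ifp, hn, hfr⟩

theorem Irrational.cfFract_mem_Ioo (hθ : Irrational θ) (n : ℕ) : cfFract θ n ∈ Set.Ioo 0 1 := by
  obtain ⟨ifp, hn, hfr⟩ := hθ.exists_stream_eq_some n
  obtain ⟨h0, h1⟩ := IntFractPair.nth_stream_fr_nonneg_lt_one hn
  rw [cfFract_eq hn]
  exact ⟨h0.lt_of_ne' hfr, h1⟩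

theorem cfFract_zero (θ : ℝ) : cfFract θ 0 = Int.fract θ :=
  cfFract_eq (IntFractPair.stream_zero θ)

theorem Irrational.exists_partDen (hθ : Irrational θ) (n : ℕ) :
    ∃ b : ℤ, (GenContFract.of θ).s.get? n = some ⟨1, b⟩ ∧ 1 ≤ b ∧
      (cfFract θ n)⁻¹ = b + cfFract θ (n + 1) := by
  obtain ⟨ifp, hn, hfr⟩ := hθ.exists_stream_eq_some n
  have hsucc := IntFractPair.stream_succ_of_some hn hfr
  obtain ⟨h0, h1⟩ := IntFractPair.nth_stream_fr_nonneg_lt_one hn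
  refine ⟨⌊ifp.fr⁻¹⌋, get?_of_eq_some_of_succ_get?_intFractPair_stream hsucc, ?_, ?_⟩
  · exact Int.le_floor.mpr (by exact_mod_cast one_le_inv₀ (h0.lt_of_ne' hfr) |>.mpr h1.le)
  · rw [cfFract_eq hn, cfFract_eq hsucc]
    exact (Int.floor_add_fract _).symm

theorem one_le_dens (θ : ℝ) (n : ℕ) : 1 ≤ (GenContFract.of θ).dens n := by
  induction n with
  | zero => simp [zeroth_den_eq_one]
  | succ n ih => exact ih.trans of_den_mono

theorem dens_monotone (θ : ℝ) : Monotone (GenContFract.of θ).dens :=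
  monotone_nat_of_le_succ fun _ => of_den_mono

theorem contsAux_succ_b (θ : ℝ) (n : ℕ) :
    ((GenContFract.of θ).contsAux (n + 1)).b = (GenContFract.of θ).dens n := by
  rw [den_eq_conts_b, nth_cont_eq_succ_nth_contAux]

theorem Irrational.dens_add_dens_le (hθ : Irrational θ) (n : ℕ) :
    (GenContFract.of θ).dens n + (GenContFract.of θ).dens (n + 1) ≤
      (GenContFract.of θ).dens (n + 2) := by
  obtain ⟨b, hs, hb, -⟩ := hθ.exists_partDen (n + 1)
  have hb' : (1 : ℝ) ≤ b := by exact_mod_cast hb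
  rw [dens_recurrence hs rfl rfl, one_mul]
  nlinarith [one_le_dens θ (n + 1)]

/-- `tₙ⁻¹ qₙ + qₙ₋₁ = qₙ₊₁ + tₙ₊₁ qₙ`, where `qₙ₋₁` is `((GenContFract.of θ).contsAux n).b`,
which is `0` for `n = 0`. -/
theorem Irrational.inv_cfFract_mul_dens_add (hθ : Irrational θ) (n : ℕ) :
    (cfFract θ n)⁻¹ * (GenContFract.of θ).dens n + ((GenContFract.of θ).contsAux n).b =
      (GenContFract.of θ).dens (n + 1) + cfFract θ (n + 1) * (GenContFract.of θ).dens n := by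
  obtain ⟨b, hs, -, hfr⟩ := hθ.exists_partDen n
  have hrec := contsAux_recurrence (g := GenContFract.of θ) hs rfl rfl
  rw [← contsAux_succ_b θ (n + 1), hrec, contsAux_succ_b, hfr]
  ring

theorem Irrational.exists_int_nums_eq (hθ : Irrational θ) (n : ℕ) :
    ∃ p : ℤ, (GenContFract.of θ).nums n = p := by
  induction n using Nat.strong_induction_on with
  | _ n ih =>
  match n with
  | 0 => exact ⟨⌊θ⌋, by rw [zeroth_num_eq_h, of_h_eq_floor]⟩
  | 1 =>
    obtain ⟨b, hs, -⟩ := hθ.exists_partDen 0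
    exact ⟨b * ⌊θ⌋ + 1, by rw [first_num_eq hs, of_h_eq_floor]; push_cast; ring⟩
  | n + 2 =>
    obtain ⟨p₀, hp₀⟩ := ih n (by omega)
    obtain ⟨p₁, hp₁⟩ := ih (n + 1) (by omega)
    obtain ⟨b, hs, -⟩ := hθ.exists_partDen (n + 1)
    exact ⟨b * p₁ + p₀, by rw [nums_recurrence hs hp₀ hp₁]; push_cast; ring⟩

theorem Irrational.cfError_pos (hθ : Irrational θ) (n : ℕ) : 0 < cfError θ n := by
  have := (hθ.cfFract_mem_Ioo (n + 1)).1
  have := one_le_dens θ n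
  have := one_le_dens θ (n + 1)
  unfold cfError
  positivity

theorem Irrational.abs_dens_mul_sub_nums (hθ : Irrational θ) (n : ℕ) :
    |(GenContFract.of θ).dens n * θ - (GenContFract.of θ).nums n| = cfError θ n := by
  obtain ⟨ifp, hn, hfr⟩ := hθ.exists_stream_eq_some n
  have hsub := sub_convs_eq hn
  simp only [hfr, if_false, contsAux_succ_b] at hsub
  rw [← cfFract_eq hn, hθ.inv_cfFract_mul_dens_add, ← inv_inv (_ + _), ← cfError] at hsub
  have hq : (GenContFract.of θ).dens n ≠ 0 := (zero_lt_one.trans_le (one_le_dens θ n)).ne'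
  have : (GenContFract.of θ).dens n * θ - (GenContFract.of θ).nums n =
      (-1) ^ n * cfError θ n := by
    rw [conv_eq_num_div_den] at hsub
    rw [← mul_div_cancel_left₀ ((GenContFract.of θ).nums n) hq, mul_div_assoc, ← mul_sub, hsub]
    field_simp
  rw [this, abs_mul, abs_pow, abs_neg, abs_one, one_pow, one_mul, abs_of_pos (hθ.cfError_pos n)]

theorem Irrational.cfError_succ (hθ : Irrational θ) (n : ℕ) :
    cfError θ (n + 1) = cfFract θ (n + 1) * cfError θ n := by
  have ht := (hθ.cfFract_mem_Ioo (n + 1)).1.ne'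
  rw [cfError, ← hθ.inv_cfFract_mul_dens_add, contsAux_succ_b, cfError]
  field_simp

theorem Irrational.cfError_zero (hθ : Irrational θ) : cfError θ 0 = Int.fract θ := by
  have h := hθ.inv_cfFract_mul_dens_add 0
  rw [zeroth_den_eq_one, mul_one, show ((GenContFract.of θ).contsAux 0).b = 0 from rfl,
    add_zero] at h
  rw [cfError, zeroth_den_eq_one, ← h, inv_inv, cfFract_zero]

theorem Irrational.half_le_dens_mul_cfError (hθ : Irrational θ) (n : ℕ) :
    1 / 2 ≤ (GenContFract.of θ).dens (n + 1) * cfError θ n := by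
  obtain ⟨ht0, ht1⟩ := hθ.cfFract_mem_Ioo (n + 1)
  have hq := one_le_dens θ n
  have hmono := dens_monotone θ (n.le_add_right 1)
  rw [cfError, ← div_eq_mul_inv, le_div_iff₀ (by nlinarith)]
  nlinarith

theorem Irrational.cfError_succ_lt_half (hθ : Irrational θ) (n : ℕ) :
    cfError θ (n + 1) < 1 / 2 := by
  have ht := (hθ.cfFract_mem_Ioo (n + 2)).1
  have hq := one_le_dens θ (n + 1)
  have h2 : 2 ≤ (GenContFract.of θ).dens (n + 2) := by
    linarith [hθ.dens_add_dens_le n, one_le_dens θ n]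
  have := mul_pos ht (zero_lt_one.trans_le hq)
  rw [cfError, one_div, inv_lt_inv₀ (by positivity) two_pos]
  linarith

theorem Irrational.distNearestInt_dens_succ_mul (hθ : Irrational θ) (n : ℕ) :
    distNearestInt ((GenContFract.of θ).dens (n + 1) * θ) = cfError θ (n + 1) := by
  obtain ⟨p, hp⟩ := hθ.exists_int_nums_eq (n + 1)
  have h := hθ.abs_dens_mul_sub_nums (n + 1)
  rw [hp] at h
  rw [distNearestInt_eq_of_abs_sub_lt (h ▸ hθ.cfError_succ_lt_half n), h]

theorem Irrational.cfError_succ_le_distNearestInt (hθ : Irrational θ) (n : ℕ) :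
    cfError θ (n + 1) ≤ distNearestInt ((GenContFract.of θ).dens n * θ) := by
  obtain ⟨ht0, ht1⟩ := hθ.cfFract_mem_Ioo (n + 1)
  rw [hθ.cfError_succ]
  cases n with
  | succ n =>
    rw [hθ.distNearestInt_dens_succ_mul]
    nlinarith [hθ.cfError_pos (n + 1)]
  | zero =>
    -- `‖θ‖ = min f (1 - f)`, and `t₁ f ≤ 1 - f` because `f⁻¹ = b + t₁` with `b ≥ 1`
    rw [zeroth_den_eq_one, one_mul, distNearestInt, abs_sub_round_eq_min, hθ.cfError_zero,
      le_min_iff]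
    obtain ⟨b, -, hb, hfr⟩ := hθ.exists_partDen 0
    have hb' : (1 : ℝ) ≤ b := by exact_mod_cast hb
    have hf : 0 < Int.fract θ := by simpa [← cfFract_zero] using (hθ.cfFract_mem_Ioo 0).1
    rw [cfFract_zero] at hfr
    have : Int.fract θ * (b + cfFract θ 1) = 1 := by rw [← hfr, mul_inv_cancel₀ hf.ne']
    constructor <;> nlinarith

end ContinuedFraction

theorem sub_mul_le_sum_Ico_min_add_sum_Ico_min {ψ : ℕ → ℝ} (hψ : Antitone ψ) {a b c : ℕ}
    (hab : a ≤ b) (hbc : b ≤ c) {d d' : ℝ} (hdd' : d ≤ d') (hd : d ≤ ψ (c - 1)) :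
    ((c : ℝ) - a) * d ≤
      ∑ n ∈ Finset.Ico a b, min (ψ n) d' + ∑ n ∈ Finset.Ico b c, min (ψ n) d := by
  have hψd : ∀ n < c, d ≤ ψ n := fun n hn => hd.trans (hψ (Nat.le_sub_one_of_lt hn))
  have h₁ := Finset.card_nsmul_le_sum (Finset.Ico a b) (fun n => min (ψ n) d') d fun n hn =>
    le_min (hψd n ((Finset.mem_Ico.mp hn).2.trans_le hbc)) hdd'
  have h₂ := Finset.card_nsmul_le_sum (Finset.Ico b c) (fun n => min (ψ n) d) d fun n hn =>
    le_min (hψd n (Finset.mem_Ico.mp hn).2) le_rfl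
  rw [Nat.card_Ico, nsmul_eq_mul, Nat.cast_sub hab] at h₁
  rw [Nat.card_Ico, nsmul_eq_mul, Nat.cast_sub hbc] at h₂
  linarith

theorem not_summable_of_frequently_le_pred_add {f : ℕ → ℝ} {ε : ℝ} (hε : 0 < ε)
    (h : ∃ᶠ k in atTop, ε ≤ f (k - 1) + f k) : ¬ Summable f := fun hf => by
  have h₀ := hf.tendsto_atTop_zero
  have hpair : Tendsto (fun k => f (k - 1) + f k) atTop (nhds 0) := by
    simpa using (h₀.comp (tendsto_sub_atTop_nat 1)).add h₀
  exact h ((hpair.eventually_lt_const hε).mono fun _ hk => not_le.mpr hk)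

noncomputable def blockSum (θ : ℝ) (ψ : ℕ → ℝ) (q : ℕ → ℕ) (k : ℕ) : ℝ :=
  ∑ n ∈ Finset.Ico (q k) (q (k + 1)), min (ψ n) (distNearestInt ((q k : ℝ) * θ))

theorem monotone_of_cast_eq_dens {θ : ℝ} {q : ℕ → ℕ}
    (hq : ∀ k, (q k : ℝ) = (GenContFract.of θ).dens k) : Monotone q := fun a b hab => by
  have := dens_monotone θ hab
  rw [← hq, ← hq] at this
  exact_mod_cast this

theorem Irrational.quarter_le_blockSum_add_blockSum {θ : ℝ} (hθ : Irrational θ) {q : ℕ → ℕ}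
    (hq : ∀ k, (q k : ℝ) = (GenContFract.of θ).dens k) {ψ : ℕ → ℝ}
    (hψ : Antitone ψ) (k : ℕ) (h : distNearestInt ((q (k + 1) : ℝ) * θ) ≤ ψ (q (k + 2) - 1)) :
    1 / 4 ≤ blockSum θ ψ q k + blockSum θ ψ q (k + 1) := by
  set d := distNearestInt ((q (k + 1) : ℝ) * θ) with hd_def
  have hd : d = cfError θ (k + 1) := by rw [hd_def, hq]; exact hθ.distNearestInt_dens_succ_mul k
  have hdd' : d ≤ distNearestInt ((q k : ℝ) * θ) := by
    rw [hd, hq]; exact hθ.cfError_succ_le_distNearestInt k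
  have hqmono := monotone_of_cast_eq_dens hq
  have hsum := sub_mul_le_sum_Ico_min_add_sum_Ico_min hψ (hqmono k.le_succ)
    (hqmono (k + 1).le_succ) hdd' h
  have hgrowth : (q (k + 2) : ℝ) ≤ 2 * (q (k + 2) - q k) := by
    rw [hq, hq]
    linarith [hθ.dens_add_dens_le k, dens_monotone θ (k.le_add_right 1)]
  have hhalf : 1 / 2 ≤ q (k + 2) * d := by
    rw [hd, hq]; exact hθ.half_le_dens_mul_cfError (k + 1)
  calc 1 / 4 ≤ ((q (k + 2) : ℝ) - q k) * d := by nlinarith [hθ.cfError_pos (k + 1)]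
    _ ≤ blockSum θ ψ q k + blockSum θ ψ q (k + 1) := hsum

theorem large_psi_case_divergence_general
    (θ : ℝ) (hθ : Irrational θ) (q : ℕ → ℕ)
    (hq : ∀ k, (q k : ℝ) = (GenContFract.of θ).dens k)
    (ψ : ℕ → ℝ) (hψmono : ∀ m n, m ≤ n → ψ n ≤ ψ m)
    (hinf : {k : ℕ | distNearestInt ((q k : ℝ) * θ) ≤ ψ (q (k + 1) - 1)}.Infinite) :
    (¬ Summable fun k =>
      ∑ n ∈ Finset.Ico (q k) (q (k + 1)), min (ψ n) (distNearestInt ((q k : ℝ) * θ))) ∧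
    ∀ k : ℕ, 1 ≤ k → distNearestInt ((q k : ℝ) * θ) ≤ ψ (q (k + 1) - 1) →
      1 / 4 ≤
        (∑ n ∈ Finset.Ico (q (k - 1)) (q k), min (ψ n) (distNearestInt ((q (k - 1) : ℝ) * θ))) +
        ∑ n ∈ Finset.Ico (q k) (q (k + 1)), min (ψ n) (distNearestInt ((q k : ℝ) * θ)) := by
  have hpair (k : ℕ) (hk : 1 ≤ k) (h : distNearestInt ((q k : ℝ) * θ) ≤ ψ (q (k + 1) - 1)) :
      1 / 4 ≤ blockSum θ ψ q (k - 1) + blockSum θ ψ q k := by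
    obtain ⟨j, rfl⟩ := Nat.exists_eq_add_of_le' hk
    exact hθ.quarter_le_blockSum_add_blockSum hq hψmono j h
  refine ⟨not_summable_of_frequently_le_pred_add (f := blockSum θ ψ q) (ε := 1 / 4)
    (by norm_num) ?_, fun k hk h => ?_⟩
  · exact ((Nat.frequently_atTop_iff_infinite.mpr hinf).and_eventually
      (eventually_ge_atTop 1)).mono fun k ⟨h, hk⟩ => hpair k hk h
  · simpa only [blockSum, Nat.sub_add_cancel hk] using hpair k hk h

theorem large_psi_case_divergence
    (θ : ℝ) (hθ : Irrational θ) (q : ℕ → ℕ)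
    (hq : ∀ k, (q k : ℝ) = (GenContFract.of θ).dens k)
    (ψ : ℕ → ℝ) (hψpos : ∀ n, 0 < ψ n) (hψmono : ∀ m n, m ≤ n → ψ n ≤ ψ m)
    (hinf : {k : ℕ | distNearestInt ((q k : ℝ) * θ) ≤ ψ (q (k + 1) - 1)}.Infinite) :
    (¬ Summable fun k =>
      ∑ n ∈ Finset.Ico (q k) (q (k + 1)), min (ψ n) (distNearestInt ((q k : ℝ) * θ))) ∧
    ∀ k : ℕ, 1 ≤ k → distNearestInt ((q k : ℝ) * θ) ≤ ψ (q (k + 1) - 1) →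
      1 / 4 ≤
        (∑ n ∈ Finset.Ico (q (k - 1)) (q k), min (ψ n) (distNearestInt ((q (k - 1) : ℝ) * θ))) +
        ∑ n ∈ Finset.Ico (q k) (q (k + 1)), min (ψ n) (distNearestInt ((q k : ℝ) * θ)) :=
  large_psi_case_divergence_general θ hθ q hq ψ hψmono hinf
end
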